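/- arXiv:1904.09794 — 6 statements merged into one kernel-verified Lean document; each statement's English description precedes it below -/
import Mathlib

section
/- The Kleisli extension preserves continuity: if g : ℕ → ((ℕ → ℕ) → ℕ) is such that g i is continuous for every i : ℕ, and f : (ℕ → ℕ) → ℕ is continuous, then the function α ↦ g (f α) α is continuous. -/
theorem stmt_2 (g : ℕ → (ℕ → ℕ) → ℕ) (f : (ℕ → ℕ) → ℕ)
    (hg : ∀ i : ℕ, ∀ α : ℕ → ℕ, ∃ m : ℕ, ∀ β : ℕ → ℕ, (∀ j < m, α j = β j) → g i α = g i β)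
    (hf : ∀ α : ℕ → ℕ, ∃ m : ℕ, ∀ β : ℕ → ℕ, (∀ j < m, α j = β j) → f α = f β) :
    ∀ α : ℕ → ℕ, ∃ m : ℕ, ∀ β : ℕ → ℕ, (∀ j < m, α j = β j) →
      g (f α) α = g (f β) β := by
  intro α
  obtain ⟨m1, h1⟩ := hf α
  obtain ⟨m2, h2⟩ := hg (f α) α
  refine ⟨max m1 m2, fun β hβ => ?_⟩
  have hfab : f α = f β := h1 β fun j hj => hβ j (lt_of_lt_of_le hj (le_max_left _ _))
  have : g (f α) α = g (f α) β := h2 β fun j hj => hβ j (lt_of_lt_of_le hj (le_max_right _ _))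
  rw [this, hfab]
end

section
/- The generic element Ω defined by Ω f α := α (f α) has the following uniform continuity property on the Cantor space: if f : (ℕ → ℕ) → ℕ restricted to binary sequences is uniformly continuous (there is m such that any two binary sequences agreeing below m give equal values of f, where binary means all values are ≤ 1), then Ω f restricted to binary sequences is uniformly continuous. -/
theorem stmt_5
    (Ω : ((ℕ → ℕ) → ℕ) → (ℕ → ℕ) → ℕ)
    (hΩ : ∀ f α, Ω f α = α (f α))
    (f : (ℕ → ℕ) → ℕ)
    (hf : ∃ m : ℕ, ∀ α β : ℕ → ℕ, (∀ i, α i ≤ 1) → (∀ i, β i ≤ 1) →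
      (∀ i < m, α i = β i) → f α = f β) :
    ∃ m : ℕ, ∀ α β : ℕ → ℕ, (∀ i, α i ≤ 1) → (∀ i, β i ≤ 1) →
      (∀ i < m, α i = β i) → Ω f α = Ω f β := by
  obtain ⟨m, hm⟩ := hf
  set ind : Finset ℕ → (ℕ → ℕ) := fun s i => if i ∈ s then 1 else 0 with hind
  refine ⟨m ⊔ ((Finset.range m).powerset.sup (fun s => f (ind s) + 1)), ?_⟩
  intro α β hα hβ hab
  have key : ∀ γ : ℕ → ℕ, (∀ i, γ i ≤ 1) →
      f γ < m ⊔ ((Finset.range m).powerset.sup (fun s => f (ind s) + 1)) := by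
    intro γ hγ
    set s := (Finset.range m).filter (fun i => γ i = 1) with hs
    have hind1 : ∀ i, ind s i ≤ 1 := by
      intro i; simp only [hind]; split <;> omega
    have : f γ = f (ind s) := by
      apply hm γ (ind s) hγ hind1
      intro i hi
      simp only [hind, hs, Finset.mem_filter, Finset.mem_range]
      have := hγ i
      split <;> omega
    rw [this]
    have : f (ind s) + 1 ≤ (Finset.range m).powerset.sup (fun s => f (ind s) + 1) :=
      Finset.le_sup (f := fun s => f (ind s) + 1) (Finset.mem_powerset.mpr (Finset.filter_subset _ _))
    omega
  have hfab : f α = f β := by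
    apply hm α β hα hβ
    intro i hi
    exact hab i (lt_of_lt_of_le hi (le_max_left _ _))
  rw [hΩ, hΩ, hfab]
  exact hab _ (key β hβ)
end

section
/- Define a family of relations R_ρ^α, parametrized by α : ℕ → ℕ, on the simple types over a base type, where the b-translation sends the base type ℕ to (ℕ → ℕ) → ℕ and commutes with function types: f R_ℕ^α n iff f α = n, and g R_{σ→τ}^α h iff for all x, y with x R_σ^α y, g x R_τ^α h y. Then, for ρ = ℕ: if a : ℕ^b and a' : ℕ satisfy a R^α a', and f : ℕ^b → ℕ^b → ℕ^b and f' : ℕ → ℕ → ℕ satisfy f R^α f' (at type ℕ → ℕ → ℕ), then for every i : ℕ, (Nat.rec (motive := λ _, (ℕ→ℕ)→ℕ) a (λ k ih, f (λ _, k) ih) i) R_ℕ^α (Nat.rec a' f' i). -/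
theorem stmt_8 (α : ℕ → ℕ)
    (a : (ℕ → ℕ) → ℕ) (a' : ℕ)
    (f : ((ℕ → ℕ) → ℕ) → ((ℕ → ℕ) → ℕ) → ((ℕ → ℕ) → ℕ))
    (f' : ℕ → ℕ → ℕ)
    (ha : a α = a')
    (hf : ∀ (x : (ℕ → ℕ) → ℕ) (y : ℕ), x α = y →
      ∀ (u : (ℕ → ℕ) → ℕ) (v : ℕ), u α = v → f x u α = f' y v) :
    ∀ i : ℕ,
      (Nat.rec (motive := fun _ => (ℕ → ℕ) → ℕ) a (fun k ih => f (fun _ => k) ih) i) α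
        = Nat.rec (motive := fun _ => ℕ) a' f' i := by
  intro i
  induction i with
  | zero => exact ha
  | succ k ih => exact hf (fun _ => k) k rfl _ _ ih
end

section
/- If f : (ℕ → Bool) → ℕ is uniformly continuous, then the function α ↦ (if α (f α) then 1 else 0) is uniformly continuous. -/
theorem stmt_12 (f : (ℕ → Bool) → ℕ)
    (hf : ∃ m : ℕ, ∀ α β : ℕ → Bool, (∀ i < m, α i = β i) → f α = f β) :
    ∃ m : ℕ, ∀ α β : ℕ → Bool, (∀ i < m, α i = β i) →
      (if α (f α) then 1 else 0 : ℕ) = (if β (f β) then 1 else 0) := by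
  obtain ⟨m, hm⟩ := hf
  set g : (Fin m → Bool) → ℕ := fun v => f (fun i => if h : i < m then v ⟨i, h⟩ else false)
  set M : ℕ := Finset.univ.sup g with hM
  have hbound : ∀ α : ℕ → Bool, f α ≤ M := by
    intro α
    have : f α = g (fun i => α i) := by
      apply hm
      intro i hi
      simp [g, hi]
    rw [this]
    exact Finset.le_sup (Finset.mem_univ _)
  refine ⟨max m (M + 1), ?_⟩
  intro α β hab
  have hfab : f α = f β := hm α β fun i hi => hab i (lt_of_lt_of_le hi (le_max_left _ _))
  have hα : α (f α) = β (f α) := by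
    apply hab
    exact lt_of_le_of_lt (hbound α) (lt_of_lt_of_le (Nat.lt_succ_self M) (le_max_right _ _))
  rw [hα, hfab]
end

section
/- Define moduli-pairing Kleisli extension: given g : ℕ → ((ℕ → ℕ) → ℕ) × ((ℕ → ℕ) → ℕ) and f : ((ℕ → ℕ) → ℕ) × ((ℕ → ℕ) → ℕ), where for each pair w = (V, M), M is a modulus-of-continuity function for V (∀ α β, (∀ i < M α, α i = β i) → V α = V β). If each g i and f satisfy this invariant, then the pair (λ α, (g (f.1 α)).1 α, λ α, max ((g (f.1 α)).2 α) (f.2 α)) also satisfies it. -/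
def ModInv (w : ((ℕ → ℕ) → ℕ) × ((ℕ → ℕ) → ℕ)) : Prop :=
  ∀ α β : ℕ → ℕ, (∀ i < w.2 α, α i = β i) → w.1 α = w.1 β

theorem stmt_16 (g : ℕ → ((ℕ → ℕ) → ℕ) × ((ℕ → ℕ) → ℕ))
    (f : ((ℕ → ℕ) → ℕ) × ((ℕ → ℕ) → ℕ))
    (hg : ∀ i, ModInv (g i)) (hf : ModInv f) :
    ModInv (fun α => (g (f.1 α)).1 α, fun α => max ((g (f.1 α)).2 α) (f.2 α)) := by
  intro α β h
  simp only at h ⊢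
  have hfa : f.1 α = f.1 β :=
    hf α β fun i hi => h i (lt_of_lt_of_le hi (le_max_right _ _))
  rw [← hfa]
  exact hg (f.1 α) α β fun i hi => h i (lt_of_lt_of_le hi (le_max_left _ _))
end

section
/- The pair version of the generic element preserves the modulus invariant: if (V, M) satisfies the invariant that M is a modulus-of-continuity function for V, then the pair (λ α, α (V α), λ α, max (M α) (V α + 1)) also satisfies the invariant. -/
theorem stmt_17 (V M : (ℕ → ℕ) → ℕ)
    (h : ∀ α β : ℕ → ℕ, (∀ i < M α, α i = β i) → V α = V β) :
    ∀ α β : ℕ → ℕ, (∀ i < max (M α) (V α + 1), α i = β i) →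
      α (V α) = β (V β) := by
  intro α β hab
  have hv : V α = V β := h α β (fun i hi => hab i (lt_max_of_lt_left hi))
  rw [← hv]
  exact hab (V α) (lt_max_of_lt_right (Nat.lt_succ_self _))
end
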